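/- Let M be an n×n real positive semidefinite matrix and ζ > 0. Then for every n×n real positive definite matrix S, Tr(S⁻¹ M) + ζ·Tr(S⁻¹) + Tr(S) ≥ 2·Tr(√(M + ζI)), with equality when S = √(M + ζI), the positive definite square root of M + ζI. -/

import Mathlib

open Matrix

section
open scoped ComplexOrder

/-- The positive semidefinite square root of a positive semidefinite matrix
(removed from Mathlib; restored with its December 2024 definition). -/
noncomputable def Matrix.PosSemidef.sqrt {n : Type*} [Fintype n] [DecidableEq n] {𝕜 : Type*}
    [RCLike 𝕜] {A : Matrix n n 𝕜} (hA : A.PosSemidef) : Matrix n n 𝕜 :=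
  hA.1.eigenvectorUnitary.1 * diagonal ((↑) ∘ (√·) ∘ hA.1.eigenvalues) *
  (star hA.1.eigenvectorUnitary : Matrix n n 𝕜)

end

namespace Matrix

variable {n : Type*} [Fintype n] [DecidableEq n]

section Sqrt

open scoped ComplexOrder

variable {𝕜 : Type*} [RCLike 𝕜] {A : Matrix n n 𝕜}

lemma PosSemidef.posSemidef_sqrt (hA : A.PosSemidef) : hA.sqrt.PosSemidef := by
  rw [PosSemidef.sqrt, Unitary.isUnit_coe.posSemidef_star_right_conjugate_iff,
    posSemidef_diagonal_iff]
  exact fun i => RCLike.ofReal_nonneg.mpr (Real.sqrt_nonneg _)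

lemma PosSemidef.sqrt_mul_self (hA : A.PosSemidef) : hA.sqrt * hA.sqrt = A := by
  have hU : (star hA.1.eigenvectorUnitary : Matrix n n 𝕜) * hA.1.eigenvectorUnitary.1 = 1 :=
    Unitary.star_mul_self_of_mem hA.1.eigenvectorUnitary.2
  have hD : diagonal (((↑) ∘ (√·) ∘ hA.1.eigenvalues) : n → 𝕜) *
      diagonal (((↑) ∘ (√·) ∘ hA.1.eigenvalues) : n → 𝕜) =
      diagonal (RCLike.ofReal ∘ hA.1.eigenvalues : n → 𝕜) := by
    rw [diagonal_mul_diagonal]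
    congr 1
    funext i
    simp only [Function.comp_apply, ← RCLike.ofReal_mul,
      Real.mul_self_sqrt (hA.eigenvalues_nonneg i)]
  conv_rhs => rw [hA.1.spectral_theorem, Unitary.conjStarAlgAut_apply]
  rw [PosSemidef.sqrt]
  simp only [Matrix.mul_assoc]
  rw [← Matrix.mul_assoc _ hA.1.eigenvectorUnitary.1, hU, Matrix.one_mul,
    ← Matrix.mul_assoc (diagonal _), hD]

lemma PosSemidef.isUnit_det_sqrt (hA : A.PosSemidef) (hA_det : IsUnit A.det) :
    IsUnit hA.sqrt.det :=
  isUnit_of_mul_isUnit_left (by rwa [← det_mul, hA.sqrt_mul_self])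

end Sqrt

lemma trace_mul_add_smul_one {R : Type*} [CommRing R] (A B : Matrix n n R) (c : R) :
    trace (A * (B + c • 1)) = trace (A * B) + c * trace A := by
  rw [Matrix.mul_add, Matrix.mul_smul, Matrix.mul_one, trace_add, trace_smul, smul_eq_mul]

/-- Expanding `0 ≤ tr ((Q - S) S⁻¹ (Q - S))`. -/
lemma PosDef.two_mul_trace_le_trace_inv_mul_mul_self_add_trace {Q S : Matrix n n ℝ}
    (hQ : Q.IsHermitian) (hS : S.PosDef) :
    2 * trace Q ≤ trace (S⁻¹ * (Q * Q)) + trace S := by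
  have hSdet : IsUnit S.det := hS.det_pos.ne'.isUnit
  have hnonneg : 0 ≤ trace ((Q - S) * S⁻¹ * (Q - S)) := by
    have h := hS.inv.posSemidef.conjTranspose_mul_mul_same (Q - S)
    rw [conjTranspose_sub, hQ.eq, hS.1.eq] at h
    exact h.trace_nonneg
  have hexpand : (Q - S) * S⁻¹ * (Q - S)
      = Q * (S⁻¹ * Q) - Q * (S⁻¹ * S) - S * S⁻¹ * Q + S * S⁻¹ * S := by
    noncomm_ring
  rw [hexpand, nonsing_inv_mul _ hSdet, mul_nonsing_inv _ hSdet, Matrix.mul_one,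
    Matrix.one_mul, Matrix.one_mul, trace_add, trace_sub, trace_sub, trace_mul_comm Q] at hnonneg
  rw [Matrix.mul_assoc] at hnonneg
  linarith

end Matrix

theorem perturbed_variational_formula (n : ℕ) (M : Matrix (Fin n) (Fin n) ℝ)
    (hM : M.PosSemidef) (ζ : ℝ) (hζ : 0 < ζ)
    (hMζ : (M + ζ • (1 : Matrix (Fin n) (Fin n) ℝ)).PosSemidef) :
    (∀ S : Matrix (Fin n) (Fin n) ℝ, S.PosDef →
      2 * Matrix.trace hMζ.sqrt ≤
        Matrix.trace (S⁻¹ * M) + ζ * Matrix.trace S⁻¹ + Matrix.trace S) ∧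
    Matrix.trace ((hMζ.sqrt)⁻¹ * M) + ζ * Matrix.trace (hMζ.sqrt)⁻¹ +
        Matrix.trace hMζ.sqrt =
      2 * Matrix.trace hMζ.sqrt := by
  set Q := hMζ.sqrt
  have htrace (A : Matrix (Fin n) (Fin n) ℝ) :
      trace (A * (Q * Q)) = trace (A * M) + ζ * trace A := by
    rw [hMζ.sqrt_mul_self, trace_mul_add_smul_one]
  refine ⟨fun S hS => ?_, ?_⟩
  · have h := hS.two_mul_trace_le_trace_inv_mul_mul_self_add_trace hMζ.posSemidef_sqrt.1
    rwa [htrace] at h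
  · have hQdet : IsUnit Q.det :=
      hMζ.isUnit_det_sqrt (PosDef.posSemidef_add hM (PosDef.one.smul hζ)).det_pos.ne'.isUnit
    rw [← htrace, ← Matrix.mul_assoc, nonsing_inv_mul _ hQdet, Matrix.one_mul]
    ring
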